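/- arXiv:1907.09247 — 4 statements merged into one kernel-verified Lean document; each statement's English description precedes it below -/
import Mathlib

section
/- Persistence: for any belief view W and any epistemic formula φ, if W is an epistemic model of {φ} (written W ⊨ φ) then W^t ⊨ φ. -/
namespace Epist

attribute [local instance] Classical.propDecidable

/-- Epistemic formulas over a set (type) of atoms `α`. -/
inductive EForm (α : Type) : Type where
  | bot : EForm α
  | atom : α → EForm α
  | and : EForm α → EForm α → EForm α
  | or : EForm α → EForm α → EForm α
  | imp : EForm α → EForm α → EForm α
  | K : EForm α → EForm α

variable {α : Type}

/-- ¬φ abbreviates φ → ⊥. -/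
def EForm.neg (φ : EForm α) : EForm α := .imp φ .bot

/-- ⊤ abbreviates ¬⊥. -/
def EForm.top : EForm α := EForm.neg .bot

/-- Atoms occurring in a formula. -/
def EForm.atoms : EForm α → Set α
  | .bot => ∅
  | .atom a => {a}
  | .and φ ψ => φ.atoms ∪ ψ.atoms
  | .or φ ψ => φ.atoms ∪ ψ.atoms
  | .imp φ ψ => φ.atoms ∪ ψ.atoms
  | .K φ => φ.atoms

/-- A belief view: a set of HT-interpretations ⟨H,T⟩ (as pairs of sets of atoms). -/
abbrev BView (α : Type) := Set (Set α × Set α)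

/-- W^t : the total belief view {⟨T,T⟩ : ⟨H,T⟩ ∈ W}. -/
def tview (W : BView α) : BView α := (fun i => (i.2, i.2)) '' W

/-- Wellformedness of a belief view: nonempty and H ⊆ T for all members. -/
def isBView (W : BView α) : Prop := W.Nonempty ∧ ∀ i ∈ W, i.1 ⊆ i.2

/-- A belief view is total when all its HT-interpretations are total. -/
def totalView (W : BView α) : Prop := ∀ i ∈ W, i.1 = i.2

/-- Satisfaction of an epistemic formula by a belief interpretation ⟨W,H,T⟩. -/
def sat : EForm α → BView α → Set α → Set α → Prop
  | .bot, _, _, _ => False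
  | .atom a, _, H, _ => a ∈ H
  | .and φ ψ, W, H, T => sat φ W H T ∧ sat ψ W H T
  | .or φ ψ, W, H, T => sat φ W H T ∨ sat ψ W H T
  | .imp φ ψ, W, H, T =>
      (sat φ W H T → sat ψ W H T) ∧ (sat φ (tview W) T T → sat ψ (tview W) T T)
  | .K φ, W, _, _ => ∀ i ∈ W, sat φ W i.1 i.2

/-- ⟨W,H',T'⟩ ⊨ φ for all ⟨H',T'⟩ ∈ W. -/
def epSat (W : BView α) (φ : EForm α) : Prop := ∀ i ∈ W, sat φ W i.1 i.2

/-- W is an epistemic model of the theory Γ. -/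
def epModel (W : BView α) (Γ : Set (EForm α)) : Prop :=
  isBView W ∧ ∀ φ ∈ Γ, epSat W φ

/-- ⟨W,H,T⟩ is a belief model of the theory Γ. -/
def beliefModel (W : BView α) (H T : Set α) (Γ : Set (EForm α)) : Prop :=
  isBView W ∧ H ⊆ T ∧ (∀ φ ∈ Γ, sat φ W H T) ∧ ∀ φ ∈ Γ, epSat W φ

/-- Order ⪯ on belief interpretations: ⟨W',H',T'⟩ ⪯ ⟨W,H,T⟩. -/
def biLE (W' : BView α) (H' T' : Set α) (W : BView α) (H T : Set α) : Prop :=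
  (T' = T ∧ H' ⊆ H) ∧
  (∀ i ∈ W, ∃ H₁, (H₁, i.2) ∈ W' ∧ H₁ ⊆ i.1) ∧
  (∀ i ∈ W', ∃ H₁, (H₁, i.2) ∈ W ∧ i.1 ⊆ H₁)

/-- Strict order ≺ on belief interpretations. -/
def biLT (W' : BView α) (H' T' : Set α) (W : BView α) (H T : Set α) : Prop :=
  biLE W' H' T' W H T ∧ (W', H', T') ≠ (W, H, T)

/-- Order ⪯ on belief views. -/
def viewLE (W₁ W₂ : BView α) : Prop :=
  (∀ i ∈ W₂, ∃ H₁, (H₁, i.2) ∈ W₁ ∧ H₁ ⊆ i.1) ∧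
  (∀ i ∈ W₁, ∃ H₂, (H₂, i.2) ∈ W₂ ∧ i.1 ⊆ H₂)

/-- Strict order ≺ on belief views. -/
def viewLT (W₁ W₂ : BView α) : Prop := viewLE W₁ W₂ ∧ W₁ ≠ W₂

/-- ⟨W,T⟩ is an equilibrium belief model of Γ. -/
def eqBeliefModel (Γ : Set (EForm α)) (W : BView α) (T : Set α) : Prop :=
  totalView W ∧ beliefModel W T T Γ ∧
  ∀ W' H' T', beliefModel W' H' T' Γ → ¬ biLT W' H' T' W T T

/-- ⟨W,T⟩ is a weak equilibrium belief model of Γ: no belief-total (i.e. with total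
view) belief model of Γ is ≺-smaller. -/
def weakEqBeliefModel (Γ : Set (EForm α)) (W : BView α) (T : Set α) : Prop :=
  totalView W ∧ beliefModel W T T Γ ∧
  ∀ W' H' T', totalView W' → beliefModel W' H' T' Γ → ¬ biLT W' H' T' W T T

/-- Identification of a set of propositional interpretations with a total belief view. -/
def ofSets (S : Set (Set α)) : BView α := (fun T => (T, T)) '' S

/-- W is a FAEEL-world view of Γ iff W = { T : ⟨W,T⟩ is an equilibrium belief model }. -/
def FAEEL (Γ : Set (EForm α)) (W : BView α) : Prop :=
  isBView W ∧ totalView W ∧ W = ofSets {T | eqBeliefModel Γ W T}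

/-- W is a weak autoepistemic world view of Γ. -/
def weakAEWorldView (Γ : Set (EForm α)) (W : BView α) : Prop :=
  isBView W ∧ totalView W ∧ W = ofSets {T | weakEqBeliefModel Γ W T}

/-- W is a FEEL-world view of Γ. -/
def FEEL (Γ : Set (EForm α)) (W : BView α) : Prop :=
  totalView W ∧ epModel W Γ ∧ ∀ W', epModel W' Γ → ¬ viewLT W' W

/-- A belief view is simple iff ⟨H,T⟩,⟨H',T⟩ ∈ W imply H = H'. -/
def simpleView (W : BView α) : Prop := ∀ i ∈ W, ∀ j ∈ W, i.2 = j.2 → i.1 = j.1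

/-- W is an EEL-world view of Γ. -/
def EEL (Γ : Set (EForm α)) (W : BView α) : Prop :=
  totalView W ∧ epModel W Γ ∧
  ¬ ∃ W', simpleView W' ∧ epModel W' Γ ∧ tview W' = W ∧ ∃ i ∈ W', i.1 ⊂ i.2

/-- Ordinary here-and-there satisfaction (for objective, i.e. K-free, formulas). -/
def htSat (φ : EForm α) (H T : Set α) : Prop := sat φ (∅ : BView α) H T

/-- T is a stable model of the (objective) theory Δ. -/
def stableModel (Δ : Set (EForm α)) (T : Set α) : Prop :=
  (∀ φ ∈ Δ, htSat φ T T) ∧ ∀ H, H ⊂ T → ¬ ∀ φ ∈ Δ, htSat φ H T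

/-- SM[Δ] : the set of stable models of Δ. -/
def SMset (Δ : Set (EForm α)) : Set (Set α) := {T | stableModel Δ T}

/-- Subjective reduct of a formula w.r.t. a belief view W and a signature U:
each maximal subformula Kφ with Atoms(φ) ⊆ U is replaced by ⊤ if W ⊨ Kφ
and by ⊥ otherwise. -/
noncomputable def reduct (W : BView α) (U : Set α) : EForm α → EForm α
  | .bot => .bot
  | .atom a => .atom a
  | .and φ ψ => .and (reduct W U φ) (reduct W U ψ)
  | .or φ ψ => .or (reduct W U φ) (reduct W U ψ)
  | .imp φ ψ => .imp (reduct W U φ) (reduct W U ψ)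
  | .K φ =>
      if φ.atoms ⊆ U then (if epSat W (.K φ) then EForm.top else .bot)
      else .K (reduct W U φ)

/-- W is a G91-world view of Γ iff W = SM[Γ^W]. -/
def G91 (Γ : Set (EForm α)) (W : BView α) : Prop :=
  isBView W ∧ totalView W ∧ W = ofSets (SMset (reduct W Set.univ '' Γ))

/-- Negatively subjective reduct: each maximal subformula ¬Kφ is replaced
by ⊤ if W ⊭ Kφ and by ⊥ otherwise. -/
noncomputable def negReduct (W : BView α) : EForm α → EForm α
  | .bot => .bot
  | .atom a => .atom a
  | .and φ ψ => .and (negReduct W φ) (negReduct W ψ)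
  | .or φ ψ => .or (negReduct W φ) (negReduct W ψ)
  | .imp (.K φ) .bot => if epSat W (.K φ) then .bot else EForm.top
  | .imp φ ψ => .imp (negReduct W φ) (negReduct W ψ)
  | .K φ => .K (negReduct W φ)

/-- Atom, ⊤ or ⊥. -/
def isAtomBase (φ : EForm α) : Prop := (∃ a, φ = .atom a) ∨ φ = EForm.top ∨ φ = .bot

/-- Objective literals: l, ¬l or ¬¬l for l an atom, ⊤ or ⊥. -/
def isObjLit (φ : EForm α) : Prop :=
  isAtomBase φ ∨ (∃ ψ, isAtomBase ψ ∧ φ = EForm.neg ψ) ∨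
    (∃ ψ, isAtomBase ψ ∧ φ = EForm.neg (EForm.neg ψ))

/-- Subjective literals: Kl, ¬Kl or ¬¬Kl for l an objective literal. -/
def isSubjLit (φ : EForm α) : Prop :=
  (∃ l, isObjLit l ∧ φ = .K l) ∨ (∃ l, isObjLit l ∧ φ = EForm.neg (.K l)) ∨
    (∃ l, isObjLit l ∧ φ = EForm.neg (EForm.neg (.K l)))

/-- Positive subjective literals: Kl. -/
def isPosSubjLit (φ : EForm α) : Prop := ∃ l, isObjLit l ∧ φ = .K l

/-- A rule: a head disjunction of atoms and a body list of literals. -/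
structure ERule (α : Type) where
  head : List α
  body : List (EForm α)

/-- Wellformedness of a rule: every body member is an (objective or subjective) literal. -/
def ERule.wf (r : ERule α) : Prop := ∀ φ ∈ r.body, isObjLit φ ∨ isSubjLit φ

/-- Disjunction of atoms (⊥ when empty). -/
def disjForm : List α → EForm α
  | [] => .bot
  | a :: l => .or (.atom a) (disjForm l)

/-- Conjunction of formulas (⊤ when empty). -/
def conjForm : List (EForm α) → EForm α
  | [] => EForm.top
  | φ :: l => .and φ (conjForm l)

/-- The formula Head(r) ← Body(r) corresponding to a rule. -/
def ERule.form (r : ERule α) : EForm α := .imp (conjForm r.body) (disjForm r.head)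

/-- Atoms of Head(r). -/
def ERule.headAtoms (r : ERule α) : Set α := {a | a ∈ r.head}

/-- Atoms of Body_obj(r). -/
def ERule.objBodyAtoms (r : ERule α) : Set α := {a | ∃ φ ∈ r.body, isObjLit φ ∧ a ∈ φ.atoms}

/-- Atoms of Body_sub(r). -/
def ERule.subjBodyAtoms (r : ERule α) : Set α := {a | ∃ φ ∈ r.body, isSubjLit φ ∧ a ∈ φ.atoms}

/-- Atoms of Body⁺_sub(r). -/
def ERule.posSubjBodyAtoms (r : ERule α) : Set α :=
  {a | ∃ φ ∈ r.body, isPosSubjLit φ ∧ a ∈ φ.atoms}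

/-- Atoms(r). -/
def ERule.atoms (r : ERule α) : Set α := r.headAtoms ∪ {a | ∃ φ ∈ r.body, a ∈ φ.atoms}

/-- A rule is objective if all its body literals are objective. -/
def ERule.objective (r : ERule α) : Prop := ∀ φ ∈ r.body, isObjLit φ

/-- A program is a set of rules. -/
abbrev EProgram (α : Type) := Set (ERule α)

def progWF (P : EProgram α) : Prop := ∀ r ∈ P, r.wf

/-- The theory consisting of the formulas of the rules of a program. -/
def progTheory (P : EProgram α) : Set (EForm α) := ERule.form '' P

def progAtoms (P : EProgram α) : Set α := {a | ∃ r ∈ P, a ∈ r.atoms}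

def progObjective (P : EProgram α) : Prop := ∀ r ∈ P, r.objective

/-- U is an epistemic splitting set of P. -/
def splittingSet (P : EProgram α) (U : Set α) : Prop :=
  ∀ r ∈ P, r.atoms ⊆ U ∨ (r.objBodyAtoms ∪ r.headAtoms) ∩ U = ∅

/-- ⟨B,Tp⟩ is a splitting of P w.r.t. U. -/
def isSplitting (P : EProgram α) (U : Set α) (B Tp : EProgram α) : Prop :=
  B ∩ Tp = ∅ ∧ B ∪ Tp = P ∧ (∀ r ∈ B, r.atoms ⊆ U) ∧
    ∀ r ∈ Tp, (r.objBodyAtoms ∪ r.headAtoms) ∩ U = ∅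

/-- Subjective reduct of a rule. -/
noncomputable def ruleReduct (W : BView α) (U : Set α) (r : ERule α) : ERule α :=
  ⟨r.head, r.body.map (reduct W U)⟩

/-- E_U(Π,W) := (T_U(Π))^W_U, here taking the top part Tp as argument. -/
noncomputable def EU (Tp : EProgram α) (W : BView α) (U : Set α) : EProgram α :=
  ruleReduct W U '' Tp

/-- W_b ⊔ W_t (for total belief views: pointwise unions). -/
def vjoin (W₁ W₂ : BView α) : BView α :=
  {i | ∃ j ∈ W₁, ∃ k ∈ W₂, i = (j.1 ∪ k.1, j.2 ∪ k.2)}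

/-- W|_U (for total belief views: pointwise intersection with U). -/
def vrestrict (W : BView α) (U : Set α) : BView α :=
  {i | ∃ j ∈ W, i = (j.1 ∩ U, j.2 ∩ U)}

/-- Epistemic dependence dep(a,b). -/
def dep (P : EProgram α) (a b : α) : Prop :=
  ∃ r ∈ P, a ∈ r.headAtoms ∪ r.objBodyAtoms ∧ b ∈ r.subjBodyAtoms

/-- Positive epistemic dependence dep⁺(a,b). -/
def depPos (P : EProgram α) (a b : α) : Prop :=
  ∃ r ∈ P, a ∈ r.headAtoms ∪ r.objBodyAtoms ∧ b ∈ r.posSubjBodyAtoms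

/-- P is epistemically stratified. -/
def stratified (P : EProgram α) : Prop :=
  ∃ lam : α → ℕ,
    (∀ r ∈ P, ∀ a ∈ r.atoms \ r.subjBodyAtoms, ∀ b ∈ r.atoms \ r.subjBodyAtoms,
      lam a = lam b) ∧
    ∀ a b, dep P a b → lam a > lam b

/-- P is epistemically tight. -/
def tight (P : EProgram α) : Prop :=
  ∃ lam : α → ℕ,
    (∀ r ∈ P, ∀ a ∈ r.atoms \ r.subjBodyAtoms, ∀ b ∈ r.atoms \ r.subjBodyAtoms,
      lam a = lam b) ∧
    ∀ a b, depPos P a b → lam a > lam b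

/-- A semantics S satisfies the epistemic splitting property. -/
def satisfiesSplitting (S : EProgram α → BView α → Prop) : Prop :=
  ∀ P : EProgram α, progWF P → ∀ U : Set α, splittingSet P U →
    ∀ B Tp : EProgram α, isSplitting P U B Tp →
      ∀ W : BView α,
        S P W ↔ ∃ Wb Wt, S B Wb ∧ S (EU Tp Wb U) Wt ∧ W = vjoin Wb Wt

/-- A semantics S satisfies supra-ASP. -/
def supraASP (S : EProgram α → BView α → Prop) : Prop :=
  ∀ P : EProgram α, progWF P → progObjective P →
    (SMset (progTheory P) ≠ ∅ ∧ ∀ W, (S P W ↔ W = ofSets (SMset (progTheory P)))) ∨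
    (SMset (progTheory P) = ∅ ∧ ∀ W, ¬ S P W)

end Epist

/-! Satisfaction passes from ⟨W,H,T⟩ to ⟨W^t,T,T⟩: atoms because H ⊆ T, implications because
their semantics already contains the clause at ⟨W^t,T,T⟩ and (W^t)^t = W^t, and `K` by applying
the induction hypothesis at every member of W. -/

namespace Epist

variable {α : Type}

@[simp]
theorem tview_tview (W : BView α) : tview (tview W) = tview W := by
  simp [tview, Set.image_image]

theorem isBView_tview {W : BView α} (hW : isBView W) : isBView (tview W) :=
  ⟨hW.1.image _, by rintro _ ⟨i, -, rfl⟩; exact subset_rfl⟩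

theorem sat_tview_of_sat (φ : EForm α) {W : BView α} (hW : ∀ i ∈ W, i.1 ⊆ i.2)
    {H T : Set α} (hHT : H ⊆ T) (h : sat φ W H T) : sat φ (tview W) T T := by
  induction φ generalizing H T with
  | bot => exact h
  | atom a => exact hHT h
  | and φ ψ ihφ ihψ => exact ⟨ihφ hHT h.1, ihψ hHT h.2⟩
  | or φ ψ ihφ ihψ => exact h.imp (ihφ hHT) (ihψ hHT)
  | imp φ ψ _ _ => exact ⟨h.2, by rw [tview_tview]; exact h.2⟩
  | K φ ih =>
      rintro _ ⟨i, hi, rfl⟩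
      exact ih (hW i hi) (h i hi)

theorem epModel_tview {W : BView α} {Γ : Set (EForm α)} (h : epModel W Γ) :
    epModel (tview W) Γ := by
  refine ⟨isBView_tview h.1, fun φ hφ => ?_⟩
  rintro _ ⟨i, hi, rfl⟩
  exact sat_tview_of_sat φ h.1.2 (h.1.2 i hi) (h.2 φ hφ i hi)

/-- Persistence: if W ⊨ φ then W^t ⊨ φ. -/
theorem stmt1 {α : Type} (W : BView α) (φ : EForm α) (h : epModel W {φ}) :
    epModel (tview W) {φ} :=
  epModel_tview h

end Epist
end

section
/- Every FAEEL-world view of any theory Γ is also a FEEL-world view of Γ. -/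
namespace Epist

attribute [local instance] Classical.propDecidable

variable {α : Type}

end Epist
/-!
Let `W` be a FAEEL-world view of `Γ`. Every `T ∈ W` yields an equilibrium belief model
`⟨W, T⟩`, so `W` is an epistemic model. Suppose `W' ≺ W` were a smaller epistemic model.
Two total views comparable under `⪯` coincide, so `W'` contains some `⟨H, T⟩` with `H ⊊ T`;
then `⟨W', H, T⟩` is a belief model strictly below `⟨W, T, T⟩`, and `T ∈ W` by
condition (ii) of `W' ⪯ W`. This contradicts the equilibrium property of `⟨W, T⟩`.
-/
namespace Epist

variable {α : Type}

theorem totalView.mk_eq {W : BView α} (hW : totalView W) {i : Set α × Set α} (hi : i ∈ W) :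
    (i.2, i.2) = i :=
  Prod.ext (hW i hi).symm rfl

theorem totalView.mk_mem {W : BView α} (hW : totalView W) {i : Set α × Set α} (hi : i ∈ W) :
    (i.2, i.2) ∈ W := by
  rwa [hW.mk_eq hi]

theorem viewLE.mk_mem_right {W₁ W₂ : BView α} (hle : viewLE W₁ W₂) (hW₂ : totalView W₂)
    {i : Set α × Set α} (hi : i ∈ W₁) : (i.2, i.2) ∈ W₂ := by
  obtain ⟨H₂, hH₂, -⟩ := hle.2 i hi
  exact hW₂.mk_mem (i := (H₂, i.2)) hH₂

theorem viewLE.mk_mem_left {W₁ W₂ : BView α} (hle : viewLE W₁ W₂) (hW₁ : totalView W₁)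
    {i : Set α × Set α} (hi : i ∈ W₂) : (i.2, i.2) ∈ W₁ := by
  obtain ⟨H₁, hH₁, -⟩ := hle.1 i hi
  exact hW₁.mk_mem (i := (H₁, i.2)) hH₁

theorem viewLE.eq_of_totalView {W₁ W₂ : BView α} (hle : viewLE W₁ W₂)
    (hW₁ : totalView W₁) (hW₂ : totalView W₂) : W₁ = W₂ := by
  ext i
  constructor
  · intro hi
    rw [← hW₁.mk_eq hi]
    exact hle.mk_mem_right hW₂ hi
  · intro hi
    rw [← hW₂.mk_eq hi]
    exact hle.mk_mem_left hW₁ hi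

theorem biLT_of_viewLE {W' W : BView α} {H T : Set α} (hle : viewLE W' W) (hHT : H ⊂ T) :
    biLT W' H T W T T :=
  ⟨⟨⟨rfl, hHT.subset⟩, hle⟩, fun h => hHT.ne (Prod.ext_iff.1 (Prod.ext_iff.1 h).2).1⟩

theorem epModel.beliefModel {W : BView α} {Γ : Set (EForm α)} (hW : epModel W Γ)
    {i : Set α × Set α} (hi : i ∈ W) : beliefModel W i.1 i.2 Γ :=
  ⟨hW.1, hW.1.2 i hi, fun φ hφ => hW.2 φ hφ i hi, hW.2⟩

theorem mk_mem_ofSets {S : Set (Set α)} {T : Set α} : (T, T) ∈ ofSets S ↔ T ∈ S := by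
  simp [ofSets]

theorem FAEEL.eqBeliefModel {Γ : Set (EForm α)} {W : BView α} (hW : FAEEL Γ W) {T : Set α}
    (hT : (T, T) ∈ W) : eqBeliefModel Γ W T := by
  rw [hW.2.2] at hT
  exact mk_mem_ofSets.1 hT

theorem FAEEL.epModel {Γ : Set (EForm α)} {W : BView α} (hW : FAEEL Γ W) : epModel W Γ := by
  obtain ⟨i, hi⟩ := hW.1.1
  exact ⟨hW.1, (hW.eqBeliefModel (hW.2.1.mk_mem hi)).2.1.2.2.2⟩

/-- every FAEEL-world view of Γ is also a FEEL-world view of Γ. -/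
theorem stmt3 {α : Type} (Γ : Set (EForm α)) (W : BView α) (h : FAEEL Γ W) :
    FEEL Γ W := by
  refine ⟨h.2.1, h.epModel, ?_⟩
  rintro W' hW' ⟨hle, hne⟩
  by_cases hW'tot : totalView W'
  · exact hne (hle.eq_of_totalView hW'tot h.2.1)
  · obtain ⟨i, hi, hHT⟩ : ∃ i ∈ W', i.1 ≠ i.2 := by simpa [totalView] using hW'tot
    have hstrict : i.1 ⊂ i.2 := (hW'.1.2 i hi).ssubset_of_ne hHT
    exact (h.eqBeliefModel (hle.mk_mem_right h.2.1 hi)).2.2 W' i.1 i.2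
      (hW'.beliefModel hi) (biLT_of_viewLE hle hstrict)

end Epist
end

section
/- For any theory Γ, a total belief view W is a FAEEL-world view of Γ if and only if W is both a FEEL-world view of Γ and a G91-world view of Γ. -/
namespace Epist

attribute [local instance] Classical.propDecidable

variable {α : Type}

end Epist
namespace Epist

/-!
For a total view `W`, the reduct `Γ^W` is satisfied by `⟨H,T⟩` exactly when `⟨W,H,T⟩` satisfies `Γ`,
so `SM[Γ^W]` consists of the `T` that are equilibrium models of `Γ` with the view `W` held fixed.
A belief model strictly below `⟨W,T⟩` either keeps the view, contradicting the stability of `T`,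
or shrinks it, giving an epistemic model strictly below `W`. Hence, once `W` is a FEEL-world view,
its equilibrium belief models are exactly `SM[Γ^W]`. Conversely, if `W` is a FAEEL-world view,
any `T ∈ W` gives an equilibrium belief model `⟨W,T⟩`, which witnesses the minimality of `W`.
-/

variable {Γ : Set (EForm α)} {W W' : BView α} {H H' T T' : Set α}

lemma tview_eq_self (hW : totalView W) : tview W = W :=
  calc tview W = id '' W := Set.image_congr fun i hi => Prod.ext (hW i hi).symm rfl
    _ = W := Set.image_id W

lemma sat_top (V : BView α) (H T : Set α) : sat EForm.top V H T := by
  simp [EForm.top, EForm.neg, sat]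

lemma sat_reduct_univ_iff (hW : totalView W) (hne : W.Nonempty) (φ : EForm α) (V : BView α)
    (H T : Set α) : sat (reduct W Set.univ φ) V H T ↔ sat φ W H T := by
  induction φ generalizing V H T with
  | bot => rfl
  | atom a => rfl
  | and φ ψ ihφ ihψ => simp only [reduct, sat, ihφ, ihψ]
  | or φ ψ ihφ ihψ => simp only [reduct, sat, ihφ, ihψ]
  | imp φ ψ ihφ ihψ => simp only [reduct, sat, ihφ, ihψ, tview_eq_self hW]
  | K φ =>
    simp only [reduct, Set.subset_univ, ↓reduceIte]
    -- `Kφ` holds at one point of `W` iff it holds at all of them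
    split_ifs with hK
    · obtain ⟨i, hi⟩ := hne
      exact iff_of_true (sat_top V H T) (hK i hi)
    · exact iff_of_false id fun h => hK fun _ _ => h

lemma mem_SMset_reduct_iff (hW : totalView W) (hne : W.Nonempty) :
    T ∈ SMset (reduct W Set.univ '' Γ) ↔
      (∀ φ ∈ Γ, sat φ W T T) ∧ ∀ H, H ⊂ T → ¬ ∀ φ ∈ Γ, sat φ W H T := by
  simp only [SMset, Set.mem_ofPred_eq, stableModel, htSat, Set.forall_mem_image,
    sat_reduct_univ_iff hW hne]

lemma viewLE_refl (W : BView α) : viewLE W W :=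
  ⟨fun i hi => ⟨i.1, hi, subset_rfl⟩, fun i hi => ⟨i.1, hi, subset_rfl⟩⟩

lemma biLT_of_ssubset (h : H ⊂ T) : biLT W H T W T T :=
  ⟨⟨⟨rfl, h.subset⟩, viewLE_refl W⟩, fun e => h.ne (congrArg (·.2.1) e)⟩

lemma biLT.viewLT_or_ssubset (h : biLT W' H' T' W T T) : viewLT W' W ∨ W' = W ∧ H' ⊂ T := by
  obtain ⟨⟨⟨rfl, hH'⟩, hle⟩, hne⟩ := h
  by_cases hW' : W' = W
  · subst hW'
    exact Or.inr ⟨rfl, hH'.ssubset_of_ne fun e => hne (by rw [e])⟩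
  · exact Or.inl ⟨hle, hW'⟩

lemma FAEEL.toFEEL (h : FAEEL Γ W) : FEEL Γ W := by
  obtain ⟨⟨⟨i, hi⟩, -⟩, hW, hfix⟩ := h
  have hi' := hi
  rw [hfix] at hi'
  obtain ⟨T, ⟨-, ⟨hbv, -, -, hep⟩, hleast⟩, rfl⟩ := hi'
  refine ⟨hW, ⟨hbv, hep⟩, fun W' hmod' hlt => ?_⟩
  obtain ⟨H', hH'W', hH'T⟩ := hlt.1.1 _ hi
  have hbm : beliefModel W' H' T Γ :=
    ⟨hmod'.1, hmod'.1.2 _ hH'W', fun φ hφ => hmod'.2 φ hφ _ hH'W', hmod'.2⟩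
  exact hleast W' H' T hbm ⟨⟨⟨rfl, hH'T⟩, hlt.1⟩, fun e => hlt.2 (congrArg Prod.fst e)⟩

lemma FEEL.eqBeliefModel_iff (h : FEEL Γ W) (T : Set α) :
    eqBeliefModel Γ W T ↔ T ∈ SMset (reduct W Set.univ '' Γ) := by
  obtain ⟨hW, hmod, hmin⟩ := h
  rw [mem_SMset_reduct_iff hW hmod.1.1]
  constructor
  · rintro ⟨-, ⟨-, -, hsat, -⟩, hleast⟩
    exact ⟨hsat, fun H hHT hH =>
      hleast W H T ⟨hmod.1, hHT.subset, hH, hmod.2⟩ (biLT_of_ssubset hHT)⟩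
  · rintro ⟨hsat, hstable⟩
    refine ⟨hW, ⟨hmod.1, subset_rfl, hsat, hmod.2⟩, fun W' H' T' hbm hlt => ?_⟩
    obtain hlt' | ⟨rfl, hH'⟩ := hlt.viewLT_or_ssubset
    · exact hmin W' ⟨hbm.1, hbm.2.2.2⟩ hlt'
    · exact hstable H' hH' (hlt.1.1.1 ▸ hbm.2.2.1)

theorem stmt4_general {α : Type} (Γ : Set (EForm α)) (W : BView α) :
    FAEEL Γ W ↔ FEEL Γ W ∧ G91 Γ W := by
  constructor
  · intro h
    have hF := h.toFEEL
    exact ⟨hF, h.1, h.2.1, h.2.2.trans (congrArg ofSets (Set.ext hF.eqBeliefModel_iff))⟩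
  · rintro ⟨hF, hbv, hW, hfix⟩
    exact ⟨hbv, hW, hfix.trans (congrArg ofSets (Set.ext hF.eqBeliefModel_iff)).symm⟩

/-- W is a FAEEL-world view of Γ iff W is both a FEEL-world view
and a G91-world view of Γ. -/
theorem stmt4 {α : Type} (Γ : Set (EForm α)) (W : BView α) (hW : totalView W) :
    FAEEL Γ W ↔ FEEL Γ W ∧ G91 Γ W :=
  stmt4_general Γ W

end Epist
end

section
/- Let U ⊆ At be a set of atoms and Π = Π₁ ∪ Π₂ a program such that Atoms(Π₁) ⊆ U and Atoms(Π₂) ⊆ Ū = At∖U. Then a total belief view W is a FEEL-world view of Π if and only if W|_U is a FEEL-world view of Π₁ and W|_Ū is a FEEL-world view of Π₂. -/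
namespace Epist

attribute [local instance] Classical.propDecidable

variable {α : Type}

end Epist

/-!
Satisfaction of a formula only depends on the restriction of the belief interpretation to the
atoms of the formula, so `W` is an epistemic model of `Γ₁ ∪ Γ₂` iff `W|_U` is one of `Γ₁` and
`W|_Uᶜ` one of `Γ₂`. A model `V ≺ W|_U` of `Γ₁` lifts to a model of `Γ₁ ∪ Γ₂` strictly below `W`
by replacing the `U`-part of each world `T` of `W` by the members `⟨H, T ∩ U⟩` of `V`.
Conversely, a model `W' ≺ W` restricts to models below `W|_U` and `W|_Uᶜ`; by minimality these
restrictions are equal to `W|_U` and `W|_Uᶜ`, so `W'` is total, and a total view below `W` is `W`.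
-/

namespace Epist

variable {α : Type}

section Restriction

lemma vrestrict_eq_image (W : BView α) (U : Set α) :
    vrestrict W U = (fun j => (j.1 ∩ U, j.2 ∩ U)) '' W := by
  ext i
  simp only [vrestrict, Set.mem_ofPred_eq, Set.mem_image, eq_comm]

lemma tview_vrestrict (W : BView α) (U : Set α) :
    tview (vrestrict W U) = vrestrict (tview W) U := by
  simp only [tview, vrestrict_eq_image, Set.image_image]

lemma sat_vrestrict_iff {U : Set α} {φ : EForm α} (hφ : φ.atoms ⊆ U) (W : BView α)
    (H T : Set α) : sat φ (vrestrict W U) (H ∩ U) (T ∩ U) ↔ sat φ W H T := by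
  induction φ generalizing W H T with
  | bot => rfl
  | atom a => exact and_iff_left (hφ rfl)
  | and φ ψ ihφ ihψ | or φ ψ ihφ ihψ =>
    obtain ⟨hφ, hψ⟩ := Set.union_subset_iff.mp hφ
    simp only [sat, ihφ hφ, ihψ hψ]
  | imp φ ψ ihφ ihψ =>
    obtain ⟨hφ, hψ⟩ := Set.union_subset_iff.mp hφ
    simp only [sat, tview_vrestrict, ihφ hφ, ihψ hψ]
  | K φ ih =>
    simp only [sat]
    rw [vrestrict_eq_image, Set.forall_mem_image, ← vrestrict_eq_image]
    exact forall₂_congr fun j _ => ih hφ W j.1 j.2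

lemma epSat_vrestrict_iff {U : Set α} {φ : EForm α} (hφ : φ.atoms ⊆ U) (W : BView α) :
    epSat (vrestrict W U) φ ↔ epSat W φ := by
  rw [epSat, vrestrict_eq_image, Set.forall_mem_image, ← vrestrict_eq_image]
  exact forall₂_congr fun j _ => sat_vrestrict_iff hφ W j.1 j.2

lemma vrestrict_nonempty_iff {W : BView α} {U : Set α} :
    (vrestrict W U).Nonempty ↔ W.Nonempty := by
  rw [vrestrict_eq_image, Set.image_nonempty]

lemma isBView.vrestrict {W : BView α} (h : isBView W) (U : Set α) :
    isBView (vrestrict W U) := by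
  refine ⟨vrestrict_nonempty_iff.mpr h.1, ?_⟩
  rintro i ⟨j, hj, rfl⟩
  exact Set.inter_subset_inter_left U (h.2 j hj)

lemma epModel.vrestrict {W : BView α} {Γ : Set (EForm α)} {U : Set α} (h : epModel W Γ)
    (hΓ : ∀ φ ∈ Γ, φ.atoms ⊆ U) : epModel (vrestrict W U) Γ :=
  ⟨h.1.vrestrict U, fun φ hφ => (epSat_vrestrict_iff (hΓ φ hφ) W).mpr (h.2 φ hφ)⟩

lemma epModel.mono {W : BView α} {Γ Γ' : Set (EForm α)} (h : epModel W Γ) (hΓ : Γ' ⊆ Γ) :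
    epModel W Γ' :=
  ⟨h.1, fun φ hφ => h.2 φ (hΓ hφ)⟩

lemma totalView.vrestrict {W : BView α} (h : totalView W) (U : Set α) :
    totalView (vrestrict W U) := by
  rintro i ⟨j, hj, rfl⟩
  exact congrArg (· ∩ U) (h j hj)

lemma totalView.isBView {W : BView α} (h : totalView W) (hne : W.Nonempty) : isBView W :=
  ⟨hne, fun i hi => (h i hi).le⟩

lemma totalView_of_vrestrict {W : BView α} {U : Set α} (hU : totalView (vrestrict W U))
    (hUc : totalView (vrestrict W Uᶜ)) : totalView W := by
  intro i hi
  have hiU : i.1 ∩ U = i.2 ∩ U := hU _ ⟨i, hi, rfl⟩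
  have hiUc : i.1 ∩ Uᶜ = i.2 ∩ Uᶜ := hUc _ ⟨i, hi, rfl⟩
  rw [← Set.inter_union_compl i.1 U, ← Set.inter_union_compl i.2 U, hiU, hiUc]

lemma viewLE.vrestrict {W' W : BView α} (h : viewLE W' W) (U : Set α) :
    viewLE (vrestrict W' U) (vrestrict W U) := by
  constructor
  · rintro i ⟨j, hj, rfl⟩
    obtain ⟨H, hH, hHj⟩ := h.1 j hj
    exact ⟨H ∩ U, ⟨(H, j.2), hH, rfl⟩, Set.inter_subset_inter_left U hHj⟩
  · rintro i ⟨j, hj, rfl⟩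
    obtain ⟨H, hH, hjH⟩ := h.2 j hj
    exact ⟨H ∩ U, ⟨(H, j.2), hH, rfl⟩, Set.inter_subset_inter_left U hjH⟩

lemma viewLE.eq_of_totalView_s6 {W' W : BView α} (h : viewLE W' W) (h' : totalView W')
    (hW : totalView W) : W' = W := by
  ext ⟨H, T⟩
  constructor
  · intro hi
    obtain ⟨H₂, hH₂, -⟩ := h.2 _ hi
    obtain rfl : H = T := h' _ hi
    obtain rfl : H₂ = H := hW _ hH₂
    exact hH₂
  · intro hi
    obtain ⟨H₁, hH₁, -⟩ := h.1 _ hi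
    obtain rfl : H = T := hW _ hi
    obtain rfl : H₁ = H := h' _ hH₁
    exact hH₁

end Restriction

section Patch

def patch (W V : BView α) (U : Set α) : BView α :=
  {i | ∃ j ∈ W, ∃ H ⊆ j.2 ∩ U, (H, j.2 ∩ U) ∈ V ∧ i = (H ∪ j.2 ∩ Uᶜ, j.2)}

variable {W V : BView α} {U : Set α}

lemma union_inter_compl_inter {H T : Set α} (hH : H ⊆ U) : (H ∪ T ∩ Uᶜ) ∩ U = H := by
  rw [Set.union_inter_distrib_right, Set.inter_assoc, Set.compl_inter_self, Set.inter_empty,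
    Set.union_empty, Set.inter_eq_left.mpr hH]

lemma union_inter_compl_inter_compl {H T : Set α} (hH : H ⊆ U) :
    (H ∪ T ∩ Uᶜ) ∩ Uᶜ = T ∩ Uᶜ := by
  rw [Set.union_inter_distrib_right, Set.inter_assoc, Set.inter_self,
    Set.disjoint_iff_inter_eq_empty.mp (Set.disjoint_compl_right_iff_subset.mpr hH),
    Set.empty_union]

lemma exists_mem_patch (hW : totalView W) (hle : viewLE V (vrestrict W U)) {j : Set α × Set α}
    (hj : j ∈ W) : ∃ H ⊆ j.2 ∩ U, (H ∪ j.2 ∩ Uᶜ, j.2) ∈ patch W V U := by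
  obtain ⟨H, hHV, hHj⟩ := hle.1 _ ⟨j, hj, rfl⟩
  rw [hW j hj] at hHj
  exact ⟨H, hHj, j, hj, H, hHj, hHV, rfl⟩

lemma patch_vrestrict (hV : ∀ v ∈ V, v.1 ⊆ v.2) (hle : viewLE V (vrestrict W U)) :
    vrestrict (patch W V U) U = V := by
  ext v
  constructor
  · rintro ⟨-, ⟨j, -, H, hHj, hHV, rfl⟩, rfl⟩
    rwa [union_inter_compl_inter (hHj.trans Set.inter_subset_right)]
  · intro hv
    obtain ⟨_, ⟨j, hj, hvj⟩, -⟩ := hle.2 v hv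
    have hvT : v.2 = j.2 ∩ U := congrArg Prod.snd hvj
    have hvH : v.1 ⊆ j.2 ∩ U := hvT ▸ hV v hv
    refine ⟨_, ⟨j, hj, v.1, hvH, hvT ▸ hv, rfl⟩, ?_⟩
    rw [union_inter_compl_inter (hvH.trans Set.inter_subset_right), ← hvT]

lemma patch_vrestrict_compl (hW : totalView W) (hle : viewLE V (vrestrict W U)) :
    vrestrict (patch W V U) Uᶜ = vrestrict W Uᶜ := by
  ext i
  constructor
  · rintro ⟨-, ⟨j, hj, H, hHj, -, rfl⟩, rfl⟩
    refine ⟨j, hj, ?_⟩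
    rw [union_inter_compl_inter_compl (hHj.trans Set.inter_subset_right), hW j hj]
  · rintro ⟨j, hj, rfl⟩
    obtain ⟨H, hHj, hH⟩ := exists_mem_patch hW hle hj
    refine ⟨_, hH, ?_⟩
    rw [union_inter_compl_inter_compl (hHj.trans Set.inter_subset_right), hW j hj]

lemma isBView_patch (hW : totalView W) (hne : W.Nonempty) (hle : viewLE V (vrestrict W U)) :
    isBView (patch W V U) := by
  obtain ⟨j, hj⟩ := hne
  obtain ⟨H, -, hH⟩ := exists_mem_patch hW hle hj
  refine ⟨⟨_, hH⟩, ?_⟩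
  rintro - ⟨j, -, H, hHj, -, rfl⟩
  exact Set.union_subset (hHj.trans Set.inter_subset_left) Set.inter_subset_left

lemma patch_viewLE (hW : totalView W) (hle : viewLE V (vrestrict W U)) :
    viewLE (patch W V U) W := by
  constructor
  · intro j hj
    obtain ⟨H, hHj, hH⟩ := exists_mem_patch hW hle hj
    refine ⟨_, hH, ?_⟩
    rw [hW j hj]
    exact Set.union_subset (hHj.trans Set.inter_subset_left) Set.inter_subset_left
  · rintro - ⟨⟨T', T⟩, hj, H, hHT, -, rfl⟩
    obtain rfl : T' = T := hW _ hj
    exact ⟨T', hj, Set.union_subset (hHT.trans Set.inter_subset_left) Set.inter_subset_left⟩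

end Patch

section Splitting

variable {Γ₁ Γ₂ : Set (EForm α)} {U : Set α} {W : BView α}

lemma FEEL.vrestrict_of_union (hΓ₁ : ∀ φ ∈ Γ₁, φ.atoms ⊆ U) (hΓ₂ : ∀ φ ∈ Γ₂, φ.atoms ⊆ Uᶜ)
    (h : FEEL (Γ₁ ∪ Γ₂) W) : FEEL Γ₁ (vrestrict W U) := by
  obtain ⟨hW, hmod, hmin⟩ := h
  refine ⟨hW.vrestrict U, (hmod.mono Set.subset_union_left).vrestrict hΓ₁, ?_⟩
  rintro V hV ⟨hle, hne⟩
  have hres : vrestrict (patch W V U) U = V := patch_vrestrict hV.1.2 hle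
  refine hmin (patch W V U) ⟨isBView_patch hW hmod.1.1 hle, ?_⟩
    ⟨patch_viewLE hW hle, fun h => hne (by rw [← hres, h])⟩
  rintro φ (hφ | hφ)
  · rw [← epSat_vrestrict_iff (hΓ₁ φ hφ), hres]
    exact hV.2 φ hφ
  · rw [← epSat_vrestrict_iff (hΓ₂ φ hφ), patch_vrestrict_compl hW hle,
      epSat_vrestrict_iff (hΓ₂ φ hφ)]
    exact hmod.2 φ (Or.inr hφ)

lemma FEEL.union_of_vrestrict (hΓ₁ : ∀ φ ∈ Γ₁, φ.atoms ⊆ U) (hΓ₂ : ∀ φ ∈ Γ₂, φ.atoms ⊆ Uᶜ)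
    (h₁ : FEEL Γ₁ (vrestrict W U)) (h₂ : FEEL Γ₂ (vrestrict W Uᶜ)) : FEEL (Γ₁ ∪ Γ₂) W := by
  have hW : totalView W := totalView_of_vrestrict h₁.1 h₂.1
  have hbv : isBView W := hW.isBView (vrestrict_nonempty_iff.mp h₁.2.1.1.1)
  refine ⟨hW, ⟨hbv, ?_⟩, ?_⟩
  · rintro φ (hφ | hφ)
    · exact (epSat_vrestrict_iff (hΓ₁ φ hφ) W).mp (h₁.2.1.2 φ hφ)
    · exact (epSat_vrestrict_iff (hΓ₂ φ hφ) W).mp (h₂.2.1.2 φ hφ)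
  rintro W' hW' ⟨hle, hne⟩
  have hU : vrestrict W' U = vrestrict W U := by
    by_contra hne'
    exact h₁.2.2 _ ((hW'.mono Set.subset_union_left).vrestrict hΓ₁) ⟨hle.vrestrict U, hne'⟩
  have hUc : vrestrict W' Uᶜ = vrestrict W Uᶜ := by
    by_contra hne'
    exact h₂.2.2 _ ((hW'.mono Set.subset_union_right).vrestrict hΓ₂) ⟨hle.vrestrict Uᶜ, hne'⟩
  have hW'tot : totalView W' := totalView_of_vrestrict (hU ▸ h₁.1) (hUc ▸ h₂.1)
  exact hne (hle.eq_of_totalView_s6 hW'tot hW)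

theorem FEEL_union_iff (hΓ₁ : ∀ φ ∈ Γ₁, φ.atoms ⊆ U) (hΓ₂ : ∀ φ ∈ Γ₂, φ.atoms ⊆ Uᶜ) :
    FEEL (Γ₁ ∪ Γ₂) W ↔ FEEL Γ₁ (vrestrict W U) ∧ FEEL Γ₂ (vrestrict W Uᶜ) := by
  refine ⟨fun h => ⟨h.vrestrict_of_union hΓ₁ hΓ₂, ?_⟩,
    fun h => FEEL.union_of_vrestrict hΓ₁ hΓ₂ h.1 h.2⟩
  rw [Set.union_comm] at h
  exact h.vrestrict_of_union hΓ₂ (by simpa only [compl_compl] using hΓ₁)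

end Splitting

lemma disjForm_atoms (l : List α) : (disjForm l).atoms ⊆ {a | a ∈ l} := by
  induction l with
  | nil => exact Set.empty_subset _
  | cons a l ih =>
    rintro b (rfl | hb)
    · exact List.mem_cons_self
    · exact List.mem_cons_of_mem a (ih hb)

lemma conjForm_atoms (l : List (EForm α)) :
    (conjForm l).atoms ⊆ {a | ∃ φ ∈ l, a ∈ φ.atoms} := by
  induction l with
  | nil => simp [conjForm, EForm.top, EForm.neg, EForm.atoms]
  | cons φ l ih =>
    rintro b (hb | hb)
    · exact ⟨φ, List.mem_cons_self, hb⟩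
    · obtain ⟨ψ, hψ, hb⟩ := ih hb
      exact ⟨ψ, List.mem_cons_of_mem φ hψ, hb⟩

lemma ERule.form_atoms (r : ERule α) : r.form.atoms ⊆ r.atoms :=
  Set.union_subset_iff.mpr ⟨(conjForm_atoms r.body).trans Set.subset_union_right,
    (disjForm_atoms r.head).trans Set.subset_union_left⟩

lemma progTheory_atoms {P : EProgram α} {U : Set α} (h : progAtoms P ⊆ U) :
    ∀ φ ∈ progTheory P, φ.atoms ⊆ U := by
  rintro - ⟨r, hr, rfl⟩ a ha
  exact h ⟨r, hr, r.form_atoms ha⟩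

lemma progTheory_union (P₁ P₂ : EProgram α) :
    progTheory (P₁ ∪ P₂) = progTheory P₁ ∪ progTheory P₂ :=
  Set.image_union _ _ _

theorem stmt6_general {α : Type} (U : Set α) (P1 P2 : EProgram α)
    (hA1 : progAtoms P1 ⊆ U) (hA2 : progAtoms P2 ⊆ Uᶜ)
    (W : BView α) :
    FEEL (progTheory (P1 ∪ P2)) W ↔
      FEEL (progTheory P1) (vrestrict W U) ∧ FEEL (progTheory P2) (vrestrict W Uᶜ) := by
  rw [progTheory_union]
  exact FEEL_union_iff (progTheory_atoms hA1) (progTheory_atoms hA2)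

/-- splitting a program into two halves with disjoint signatures. -/
theorem stmt6 {α : Type} (U : Set α) (P1 P2 : EProgram α)
    (h1 : progWF P1) (h2 : progWF P2)
    (hA1 : progAtoms P1 ⊆ U) (hA2 : progAtoms P2 ⊆ Uᶜ)
    (W : BView α) (hW : totalView W) :
    FEEL (progTheory (P1 ∪ P2)) W ↔
      FEEL (progTheory P1) (vrestrict W U) ∧ FEEL (progTheory P2) (vrestrict W Uᶜ) :=
  stmt6_general U P1 P2 hA1 hA2 W
end Epist
end
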